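/- The most specific generalization of two terms always exists for terms over a fixed signature, and is unique up to variable renaming. -/

import Mathlib

/-- First-order terms: variables, constructor-rooted terms and
operation-rooted terms (function calls). -/
inductive Term where
  | var : ℕ → Term
  | cons : ℕ → List Term → Term
  | fn : ℕ → List Term → Term

/-- Application of a substitution to a term. -/
def subst (σ : ℕ → Term) : Term → Term
  | .var x => σ x
  | .cons c ts => .cons c (ts.attach.map (fun t => subst σ t.1))
  | .fn f ts => .fn f (ts.attach.map (fun t => subst σ t.1))
decreasing_by
  · have := List.sizeOf_lt_of_mem t.2
    simp only [Term.cons.sizeOf_spec]; omega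
  · have := List.sizeOf_lt_of_mem t.2
    simp only [Term.fn.sizeOf_spec]; omega

/-- `t` is a generalization of `t₁` and `t₂`: both are instances of `t`. -/
def IsGen (t t₁ t₂ : Term) : Prop :=
  ∃ σ₁ σ₂ : ℕ → Term, subst σ₁ t = t₁ ∧ subst σ₂ t = t₂

/-- `t` is a most specific generalization (msg) of `t₁` and `t₂`: it is a
generalization of which every other generalization has `t` as an
instance. -/
def IsMSG (t t₁ t₂ : Term) : Prop :=
  IsGen t t₁ t₂ ∧ ∀ t', IsGen t' t₁ t₂ → ∃ θ : ℕ → Term, subst θ t' = t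

theorem term_ind (P : Term → Prop) (hv : ∀ x, P (.var x))
    (hc : ∀ c ts, (∀ t ∈ ts, P t) → P (.cons c ts))
    (hf : ∀ f ts, (∀ t ∈ ts, P t) → P (.fn f ts)) : ∀ t, P t :=
  fun t => Term.rec (motive_1 := P) (motive_2 := fun ts => ∀ t ∈ ts, P t)
    hv hc hf (by simp) (fun {h t} ihh iht => by intro u hu; rcases List.mem_cons.mp hu with rfl | hu; exacts [ihh, iht u hu]) t

theorem subst_cons (σ : ℕ → Term) (c : ℕ) (ts : List Term) :
    subst σ (.cons c ts) = .cons c (ts.map (subst σ)) := by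
  rw [subst]; simp [List.attach_map_val]

theorem subst_fn (σ : ℕ → Term) (f : ℕ) (ts : List Term) :
    subst σ (.fn f ts) = .fn f (ts.map (subst σ)) := by
  rw [subst]; simp [List.attach_map_val]

theorem subst_comp (σ₁ σ₂ : ℕ → Term) (t : Term) :
    subst σ₂ (subst σ₁ t) = subst (fun x => subst σ₂ (σ₁ x)) t := by
  induction t using term_ind with
  | hv x => simp [subst]
  | hc c ts ih => simp [subst_cons, List.map_map]; exact ih
  | hf f ts ih => simp [subst_fn, List.map_map]; exact ih

-- size
mutual
def tsize : Term → ℕ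
  | .var _ => 1
  | .cons _ ts => 2 + tsizeL ts
  | .fn _ ts => 2 + tsizeL ts
def tsizeL : List Term → ℕ
  | [] => 0
  | t :: ts => tsize t + tsizeL ts
end

theorem tsize_pos (t : Term) : 1 ≤ tsize t := by
  cases t <;> simp [tsize] <;> omega

theorem tsizeL_map_le (f : ℕ → Term) (ts : List Term)
    (h : ∀ t ∈ ts, tsize t ≤ tsize (subst f t)) :
    tsizeL ts ≤ tsizeL (ts.map (subst f)) := by
  induction ts with
  | nil => simp
  | cons a as ih =>
      simp only [List.map_cons, tsizeL]
      have := h a (by simp)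
      have := ih (fun t ht => h t (by simp [ht]))
      omega

theorem tsize_subst_le (σ : ℕ → Term) (t : Term) : tsize t ≤ tsize (subst σ t) := by
  induction t using term_ind with
  | hv x => simpa [subst, tsize] using tsize_pos (σ x)
  | hc c ts ih => simp only [subst_cons, tsize]; have := tsizeL_map_le σ ts ih; omega
  | hf f ts ih => simp only [subst_fn, tsize]; have := tsizeL_map_le σ ts ih; omega

theorem tsizeL_map_eq (f : ℕ → Term) (ts : List Term)
    (h : tsizeL (ts.map (subst f)) = tsizeL ts) :
    ∀ t ∈ ts, tsize (subst f t) = tsize t := by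
  induction ts with
  | nil => simp
  | cons a as ih =>
      simp only [List.map_cons, tsizeL] at h
      have h1 := tsize_subst_le f a
      have h2 := tsizeL_map_le f as (fun t _ => tsize_subst_le f t)
      intro t ht
      rcases List.mem_cons.mp ht with rfl | ht
      · omega
      · exact ih (by omega) t ht

/-- variable-name extractor -/
def vidx : Term → ℕ
  | .var x => x
  | _ => 0

theorem subst_of_tsize_eq (σ : ℕ → Term) (t : Term)
    (h : tsize (subst σ t) = tsize t) :
    subst (fun x => Term.var (vidx (σ x))) t = subst σ t := by
  induction t using term_ind with
  | hv x =>
      simp only [subst, tsize] at h ⊢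
      cases hx : σ x with
      | var y => simp [hx, vidx]
      | cons c ts => rw [hx] at h; simp only [tsize] at h; omega
      | fn f ts => rw [hx] at h; simp only [tsize] at h; omega
  | hc c ts ih =>
      simp only [subst_cons, tsize] at *
      congr 1
      exact List.map_congr_left fun u hu => ih u hu (tsizeL_map_eq σ ts (by omega) u hu)
  | hf f ts ih =>
      simp only [subst_fn, tsize] at *
      congr 1
      exact List.map_congr_left fun u hu => ih u hu (tsizeL_map_eq σ ts (by omega) u hu)

-- encoding of terms into ℕ
mutual
def enc : Term → ℕ
  | .var x => Nat.pair 0 x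
  | .cons c ts => Nat.pair 1 (Nat.pair c (encL ts))
  | .fn f ts => Nat.pair 2 (Nat.pair f (encL ts))
def encL : List Term → ℕ
  | [] => 0
  | t :: ts => Nat.pair (enc t) (encL ts) + 1
end

theorem encL_inj (ts : List Term)
    (h : ∀ t ∈ ts, ∀ u, enc t = enc u → t = u) :
    ∀ ts', encL ts = encL ts' → ts = ts' := by
  induction ts with
  | nil => intro ts' h'; cases ts' with
    | nil => rfl
    | cons b bs => simp [encL] at h'
  | cons a as ih =>
      intro ts' h'; cases ts' with
      | nil => simp [encL] at h'
      | cons b bs =>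
          simp only [encL, Nat.add_right_cancel_iff] at h'
          have := Nat.pair_eq_pair.mp h'
          have hab := h a (by simp) b this.1
          have := ih (fun t ht u => h t (by simp [ht]) u) bs this.2
          rw [hab, this]

theorem enc_inj : Function.Injective enc := by
  intro t
  induction t using term_ind with
  | hv x => intro u h; cases u <;> simp only [enc, Nat.pair_eq_pair] at h
            · simp [h.2]
            · omega
            · omega
  | hc c ts ih =>
      intro u h; cases u <;> simp only [enc] at h <;>
        [skip; skip; skip] <;> rw [Nat.pair_eq_pair] at h
      · omega
      · rename_i c' ts'
        have := Nat.pair_eq_pair.mp h.2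
        rw [this.1, encL_inj ts (fun t ht u hu => ih t ht hu) ts' this.2]
      · omega
  | hf f ts ih =>
      intro u h; cases u <;> simp only [enc] at h <;>
        [skip; skip; skip] <;> rw [Nat.pair_eq_pair] at h
      · omega
      · omega
      · rename_i f' ts'
        have := Nat.pair_eq_pair.mp h.2
        rw [this.1, encL_inj ts (fun t ht u hu => ih t ht hu) ts' this.2]

instance : Nonempty Term := ⟨.var 0⟩

noncomputable def dec : ℕ → Term := Function.invFun enc

theorem dec_enc (t : Term) : dec (enc t) = t :=
  Function.leftInverse_invFun enc_inj t

-- anti-unification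
mutual
def au : Term → Term → Term
  | .cons c ts, .cons c' ts' =>
      if c = c' ∧ ts.length = ts'.length then .cons c (auL ts ts')
      else .var (Nat.pair (enc (.cons c ts)) (enc (.cons c' ts')))
  | .fn f ts, .fn f' ts' =>
      if f = f' ∧ ts.length = ts'.length then .fn f (auL ts ts')
      else .var (Nat.pair (enc (.fn f ts)) (enc (.fn f' ts')))
  | a, b => .var (Nat.pair (enc a) (enc b))
def auL : List Term → List Term → List Term
  | a :: as, b :: bs => au a b :: auL as bs
  | _, _ => []
end

noncomputable def σL : ℕ → Term := fun n => dec (Nat.unpair n).1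
noncomputable def σR : ℕ → Term := fun n => dec (Nat.unpair n).2

theorem σL_pair (a b : Term) : σL (Nat.pair (enc a) (enc b)) = a := by
  simp [σL, dec_enc]
theorem σR_pair (a b : Term) : σR (Nat.pair (enc a) (enc b)) = b := by
  simp [σR, dec_enc]

theorem auL_spec (ts ts' : List Term) (hlen : ts.length = ts'.length)
    (h : ∀ a ∈ ts, ∀ b, subst σL (au a b) = a ∧ subst σR (au a b) = b) :
    (auL ts ts').map (subst σL) = ts ∧ (auL ts ts').map (subst σR) = ts' := by
  induction ts generalizing ts' with
  | nil => cases ts' with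
    | nil => simp [auL]
    | cons b bs => simp at hlen
  | cons a as ih =>
      cases ts' with
      | nil => simp at hlen
      | cons b bs =>
          simp only [List.length_cons, Nat.add_right_cancel_iff] at hlen
          have h1 := h a (by simp) b
          have h2 := ih bs hlen (fun x hx => h x (by simp [hx]))
          simp [auL, h1.1, h1.2, h2.1, h2.2]

theorem au_spec (a b : Term) : subst σL (au a b) = a ∧ subst σR (au a b) = b := by
  induction a using term_ind generalizing b with
  | hv x => cases b <;> simp [au, subst, σL_pair, σR_pair]
  | hc c ts ih =>
      cases b with
      | cons c' ts' =>
          by_cases hcond : c = c' ∧ ts.length = ts'.length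
          · rw [au, if_pos hcond]
            obtain ⟨h1, h2⟩ := auL_spec ts ts' hcond.2 ih
            simp [subst_cons, h1, h2, hcond.1]
          · rw [au, if_neg hcond]
            simp [subst, σL_pair, σR_pair]
      | var y => simp [au, subst, σL_pair, σR_pair]
      | fn f ts' => simp [au, subst, σL_pair, σR_pair]
  | hf f ts ih =>
      cases b with
      | fn f' ts' =>
          by_cases hcond : f = f' ∧ ts.length = ts'.length
          · rw [au, if_pos hcond]
            obtain ⟨h1, h2⟩ := auL_spec ts ts' hcond.2 ih
            simp [subst_fn, h1, h2, hcond.1]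
          · rw [au, if_neg hcond]
            simp [subst, σL_pair, σR_pair]
      | var y => simp [au, subst, σL_pair, σR_pair]
      | cons c ts' => simp [au, subst, σL_pair, σR_pair]

theorem auL_map (f g : ℕ → Term) (ts : List Term)
    (h : ∀ t ∈ ts, subst (fun x => au (f x) (g x)) t = au (subst f t) (subst g t)) :
    auL (ts.map (subst f)) (ts.map (subst g)) = ts.map (subst (fun x => au (f x) (g x))) := by
  induction ts with
  | nil => simp [auL]
  | cons a as ih =>
      simp only [List.map_cons, auL]
      rw [h a (by simp), ih (fun t ht => h t (by simp [ht]))]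

theorem au_hom (f g : ℕ → Term) (t : Term) :
    subst (fun x => au (f x) (g x)) t = au (subst f t) (subst g t) := by
  induction t using term_ind with
  | hv x => simp [subst]
  | hc c ts ih =>
      rw [subst_cons, subst_cons, subst_cons, au,
        if_pos ⟨rfl, by simp⟩, auL_map f g ts ih]
  | hf f' ts ih =>
      rw [subst_fn, subst_fn, subst_fn, au,
        if_pos ⟨rfl, by simp⟩, auL_map f g ts ih]


/-- The most specific generalization of two terms always exists, and it is
unique up to variable renaming. -/
theorem msg_exists_unique (t₁ t₂ : Term) :
    (∃ t, IsMSG t t₁ t₂) ∧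
    (∀ t t', IsMSG t t₁ t₂ → IsMSG t' t₁ t₂ →
      ∃ ρ : ℕ → ℕ, subst (fun x => Term.var (ρ x)) t = t') := by
  constructor
  · refine ⟨au t₁ t₂, ⟨σL, σR, (au_spec t₁ t₂).1, (au_spec t₁ t₂).2⟩, ?_⟩
    rintro t' ⟨f, g, hf, hg⟩
    exact ⟨fun x => au (f x) (g x), by rw [au_hom, hf, hg]⟩
  · intro t t' ht ht'
    obtain ⟨θ, hθ⟩ := ht'.2 t ht.1
    obtain ⟨θ', hθ'⟩ := ht.2 t' ht'.1
    have hcomp : subst θ' (subst θ t) = t := by rw [hθ, hθ']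
    have h1 := tsize_subst_le θ t
    have h2 : tsize (subst θ t) ≤ tsize t := by
      calc tsize (subst θ t) ≤ tsize (subst θ' (subst θ t)) := tsize_subst_le θ' _
        _ = tsize t := by rw [hcomp]
    exact ⟨fun x => vidx (θ x), by rw [subst_of_tsize_eq θ t (le_antisymm h2 h1), hθ]⟩
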